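/- arXiv:1902.09698 — 4 statements merged into one kernel-verified Lean document; each statement's English description precedes it below -/
import Mathlib

section
/- If a matrix A ∈ ℝ^{m×n} satisfies α‖x₁−x₂‖² ≤ ‖A(x₁−x₂)‖² ≤ β‖x₁−x₂‖² for all x₁, x₂ in a set S ⊆ ℝ^n with 0 < α < β, and x*, x_t, x_{t+1} ∈ S, then for the loss f(x) = ‖Ax − Ax*‖², step size η = 1/β, w_t = x_t − η Aᵀ(Ax_t − Ax*), and any x_{t+1} ∈ S satisfying ‖w_t − x_{t+1}‖² ≤ ‖x* − w_t‖² + δ, we have f(x_{t+1}) ≤ (β/α − 1) f(x_t) + βδ. -/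
/-!
With `u = x_{t+1} - x_t`, `v = x_t - x*` and `w = x_t - η Aᵀ A v`, the terms `η² ‖Aᵀ A v‖²` cancel
from the two sides of the projection inequality, leaving
`‖u‖² - ‖v‖² + (2/β) ⟪A v, A (u + v)⟫ ≤ δ`.
Multiplying by `β`, the upper REC bound `‖A u‖² ≤ β ‖u‖²` and the lower one `β ‖v‖² ≤ (β/α) ‖A v‖²`
turn this into a bound on `f(x_{t+1}) = ‖A u + A v‖²`.
-/

open Matrix

section
variable {E F : Type*} [NormedAddCommGroup E] [InnerProductSpace ℝ E]
  [NormedAddCommGroup F] [InnerProductSpace ℝ F]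

theorem norm_step_sub_sq_sub_norm_sub_step_sq (x y z g : E) (η : ℝ) :
    ‖y - η • g - z‖ ^ 2 - ‖x - (y - η • g)‖ ^ 2
      = ‖z - y‖ ^ 2 - ‖y - x‖ ^ 2 + 2 * η * inner ℝ g (z - x) := by
  rw [show y - η • g - z = -((z - y) + η • g) by abel, norm_neg,
    show x - (y - η • g) = η • g - (y - x) by abel, norm_add_sq_real (z - y),
    norm_sub_sq_real (η • g), show z - x = (z - y) + (y - x) by abel, inner_add_right,
    real_inner_smul_left, real_inner_smul_right, real_inner_comm g]
  ring

theorem norm_map_sub_sq_le_of_inner_step (B : E →ₗ[ℝ] F) {α β δ : ℝ} (hα : 0 < α) (hβ : 0 < β)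
    {x y z : E} (hz : ‖B (z - y)‖ ^ 2 ≤ β * ‖z - y‖ ^ 2)
    (hy : α * ‖y - x‖ ^ 2 ≤ ‖B (y - x)‖ ^ 2)
    (hstep : ‖z - y‖ ^ 2 - ‖y - x‖ ^ 2 + 2 / β * inner ℝ (B (y - x)) (B (z - x)) ≤ δ) :
    ‖B (z - x)‖ ^ 2 ≤ (β / α - 1) * ‖B (y - x)‖ ^ 2 + β * δ := by
  have hsplit : B (z - x) = B (z - y) + B (y - x) := by rw [← map_add]; abel_nf
  rw [hsplit, inner_add_right, real_inner_self_eq_norm_sq, real_inner_comm] at hstep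
  rw [hsplit, norm_add_sq_real]
  have hyβ : β * ‖y - x‖ ^ 2 ≤ β / α * ‖B (y - x)‖ ^ 2 := by
    rw [div_mul_eq_mul_div, le_div_iff₀ hα]; nlinarith
  have hβstep := mul_le_mul_of_nonneg_left hstep hβ.le
  field_simp at hβstep
  linarith
end

theorem toEuclideanLin_transpose_eq_adjoint {m n : ℕ} (A : Matrix (Fin m) (Fin n) ℝ) :
    toEuclideanLin Aᵀ = (toEuclideanLin A).adjoint := by
  rw [← conjTranspose_eq_transpose_of_trivial, toEuclideanLin_conjTranspose_eq_adjoint]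

theorem rec_pgd_one_step_general {m n : ℕ} (A : Matrix (Fin m) (Fin n) ℝ)
    (S : Set (EuclideanSpace ℝ (Fin n))) (α β δ η : ℝ)
    (hα : 0 < α) (hαβ : α < β)
    (hREC : ∀ x₁ ∈ S, ∀ x₂ ∈ S,
      α * ‖x₁ - x₂‖ ^ 2 ≤ ‖Matrix.toEuclideanLin A (x₁ - x₂)‖ ^ 2 ∧
      ‖Matrix.toEuclideanLin A (x₁ - x₂)‖ ^ 2 ≤ β * ‖x₁ - x₂‖ ^ 2)
    (xs xt xt1 : EuclideanSpace ℝ (Fin n))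
    (hxs : xs ∈ S) (hxt : xt ∈ S) (hxt1 : xt1 ∈ S)
    (f : EuclideanSpace ℝ (Fin n) → ℝ)
    (hf : ∀ x, f x = ‖Matrix.toEuclideanLin A (x - xs)‖ ^ 2)
    (hη : η = 1 / β)
    (w : EuclideanSpace ℝ (Fin n))
    (hw : w = xt - η • Matrix.toEuclideanLin Aᵀ (Matrix.toEuclideanLin A (xt - xs)))
    (hproj : ‖w - xt1‖ ^ 2 ≤ ‖xs - w‖ ^ 2 + δ) :
    f xt1 ≤ (β / α - 1) * f xt + β * δ := by
  set B := toEuclideanLin A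
  have hstep := norm_step_sub_sq_sub_norm_sub_step_sq xs xt xt1 (toEuclideanLin Aᵀ (B (xt - xs))) η
  rw [← hw, toEuclideanLin_transpose_eq_adjoint, LinearMap.adjoint_inner_left, hη,
    mul_one_div] at hstep
  rw [hf, hf]
  exact norm_map_sub_sq_le_of_inner_step B hα (hα.trans hαβ) (hREC xt1 hxt1 xt hxt).2
    (hREC xt hxt xs hxs).1 (by linarith)

theorem rec_pgd_one_step {m n : ℕ} (A : Matrix (Fin m) (Fin n) ℝ)
    (S : Set (EuclideanSpace ℝ (Fin n))) (α β δ η : ℝ)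
    (hα : 0 < α) (hαβ : α < β) (hδ : 0 ≤ δ)
    (hREC : ∀ x₁ ∈ S, ∀ x₂ ∈ S,
      α * ‖x₁ - x₂‖ ^ 2 ≤ ‖Matrix.toEuclideanLin A (x₁ - x₂)‖ ^ 2 ∧
      ‖Matrix.toEuclideanLin A (x₁ - x₂)‖ ^ 2 ≤ β * ‖x₁ - x₂‖ ^ 2)
    (xs xt xt1 : EuclideanSpace ℝ (Fin n))
    (hxs : xs ∈ S) (hxt : xt ∈ S) (hxt1 : xt1 ∈ S)
    (f : EuclideanSpace ℝ (Fin n) → ℝ)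
    (hf : ∀ x, f x = ‖Matrix.toEuclideanLin A (x - xs)‖ ^ 2)
    (hη : η = 1 / β)
    (w : EuclideanSpace ℝ (Fin n))
    (hw : w = xt - η • Matrix.toEuclideanLin Aᵀ (Matrix.toEuclideanLin A (xt - xs)))
    (hproj : ‖w - xt1‖ ^ 2 ≤ ‖xs - w‖ ^ 2 + δ) :
    f xt1 ≤ (β / α - 1) * f xt + β * δ :=
  rec_pgd_one_step_general A S α β δ η hα hαβ hREC xs xt xt1 hxs hxt hxt1 f hf hη w hw hproj
end

section
/- Suppose A satisfies REC(S, α, β) with β/α < 2, x* ∈ S, and the sequence (x_n) in S satisfies f(x_{n+1}) ≤ (β/α − 1) f(x_n) + βδ where f(x) = ‖A(x − x*)‖². Then for every n, ‖x_n − x*‖² ≤ (β/α − 1)ⁿ f(x_0)/α + δ/(2α/β − 1). -/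
open Matrix

theorem rec_pgd_reconstruction_error {m n : ℕ} (A : Matrix (Fin m) (Fin n) ℝ)
    (S : Set (EuclideanSpace ℝ (Fin n))) (α β δ : ℝ)
    (hα : 0 < α) (hαβ : α < β) (hβα : β / α < 2) (hδ : 0 ≤ δ)
    (hREC : ∀ x₁ ∈ S, ∀ x₂ ∈ S,
      α * ‖x₁ - x₂‖ ^ 2 ≤ ‖Matrix.toEuclideanLin A (x₁ - x₂)‖ ^ 2 ∧
      ‖Matrix.toEuclideanLin A (x₁ - x₂)‖ ^ 2 ≤ β * ‖x₁ - x₂‖ ^ 2)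
    (xs : EuclideanSpace ℝ (Fin n)) (hxs : xs ∈ S)
    (x : ℕ → EuclideanSpace ℝ (Fin n)) (hx : ∀ k, x k ∈ S)
    (f : EuclideanSpace ℝ (Fin n) → ℝ)
    (hf : ∀ v, f v = ‖Matrix.toEuclideanLin A (v - xs)‖ ^ 2)
    (hrec : ∀ k, f (x (k + 1)) ≤ (β / α - 1) * f (x k) + β * δ) :
    ∀ k : ℕ, ‖x k - xs‖ ^ 2 ≤ (β / α - 1) ^ k * f (x 0) / α + δ / (2 * α / β - 1) := by
  set κ := β / α - 1 with hκ
  have hβ : 0 < β := hα.trans hαβ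
  have hκ0 : 0 ≤ κ := by
    have : 1 ≤ β / α := (one_le_div hα).mpr hαβ.le
    simp [hκ]; linarith
  have hκ1 : κ < 1 := by simp [hκ]; linarith
  set C := β * δ / (1 - κ) with hC
  have hC0 : 0 ≤ C := div_nonneg (mul_nonneg hβ.le hδ) (by linarith)
  have key : ∀ k, f (x k) ≤ κ ^ k * f (x 0) + C := by
    intro k
    induction k with
    | zero => simp [hC0]
    | succ k ih =>
      have h1 := hrec k
      have h2 : κ * f (x k) ≤ κ * (κ ^ k * f (x 0) + C) :=
        mul_le_mul_of_nonneg_left ih hκ0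
      have hCeq : κ * C + β * δ = C := by
        have h1κ : (1:ℝ) - κ ≠ 0 := by linarith
        rw [hC]
        field_simp
        ring
      calc f (x (k + 1)) ≤ κ * f (x k) + β * δ := h1
        _ ≤ κ * (κ ^ k * f (x 0) + C) + β * δ := by linarith
        _ = κ ^ (k + 1) * f (x 0) + (κ * C + β * δ) := by ring
        _ = κ ^ (k + 1) * f (x 0) + C := by rw [hCeq]
  intro k
  have hlow := (hREC (x k) (hx k) xs hxs).1
  rw [← hf (x k)] at hlow
  have h3 : ‖x k - xs‖ ^ 2 ≤ f (x k) / α := by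
    rw [le_div_iff₀ hα]; linarith
  have hCα : C / α = δ / (2 * α / β - 1) := by
    rw [hC, hκ]
    rw [div_div]
    rw [div_eq_div_iff]
    · field_simp
      ring
    · have : (1 - (β / α - 1)) = (2 * α - β) / α := by field_simp; ring
      rw [this]
      have h2αβ : 0 < 2 * α - β := by
        have := (div_lt_iff₀ hα).mp hβα
        linarith
      positivity
    · have : 2 * α / β - 1 = (2 * α - β) / β := by field_simp
      rw [this]
      have h2αβ : 0 < 2 * α - β := by
        have := (div_lt_iff₀ hα).mp hβα
        linarith
      positivity
  calc ‖x k - xs‖ ^ 2 ≤ f (x k) / α := h3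
    _ ≤ (κ ^ k * f (x 0) + C) / α := by
        gcongr
        exact key k
    _ = κ ^ k * f (x 0) / α + C / α := by ring
    _ = κ ^ k * f (x 0) / α + δ / (2 * α / β - 1) := by rw [hCα]
end

section
/- Let A satisfy REC(S, α, β) with κ = β/α < 2, x* ∈ S, f(x) = ‖A(x−x*)‖², and suppose f(x_n) ≤ (κ−1)ⁿ f(x_0) + βδ(1−(κ−1)ⁿ)/(2−κ) with x_n ∈ S. Then for any C > 0, whenever n ≥ (1/(2−κ)) · log(f(x_0)/(Cαδ)) and δ > 0, one has ‖x_n − x*‖² ≤ (C + 1/(2/κ − 1)) δ. -/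
open Matrix

theorem rec_pgd_eps_accuracy {m n : ℕ} (A : Matrix (Fin m) (Fin n) ℝ)
    (S : Set (EuclideanSpace ℝ (Fin n))) (α β δ κ C : ℝ)
    (hα : 0 < α) (hαβ : α ≤ β) (hκ : κ = β / α) (hκ2 : κ < 2)
    (hδ : 0 < δ) (hC : 0 < C)
    (hREC : ∀ x₁ ∈ S, ∀ x₂ ∈ S,
      α * ‖x₁ - x₂‖ ^ 2 ≤ ‖Matrix.toEuclideanLin A (x₁ - x₂)‖ ^ 2 ∧
      ‖Matrix.toEuclideanLin A (x₁ - x₂)‖ ^ 2 ≤ β * ‖x₁ - x₂‖ ^ 2)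
    (xs : EuclideanSpace ℝ (Fin n)) (hxs : xs ∈ S)
    (x : ℕ → EuclideanSpace ℝ (Fin n)) (hx : ∀ k, x k ∈ S)
    (f : EuclideanSpace ℝ (Fin n) → ℝ)
    (hf : ∀ v, f v = ‖Matrix.toEuclideanLin A (v - xs)‖ ^ 2)
    (hbound : ∀ k : ℕ,
      f (x k) ≤ (κ - 1) ^ k * f (x 0) + β * δ * (1 - (κ - 1) ^ k) / (2 - κ))
    (k : ℕ)
    (hk : (1 / (2 - κ)) * Real.log (f (x 0) / (C * α * δ)) ≤ (k : ℝ)) :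
    ‖x k - xs‖ ^ 2 ≤ (C + 1 / (2 / κ - 1)) * δ := by
  have hβ : 0 < β := lt_of_lt_of_le hα hαβ
  have hκ1 : 1 ≤ κ := by rw [hκ]; exact (one_le_div hα).mpr hαβ
  have h2κ : 0 < 2 - κ := by linarith
  have hκpos : 0 < κ := by linarith
  have hfk : α * ‖x k - xs‖ ^ 2 ≤ f (x k) := by
    rw [hf]; exact (hREC (x k) (hx k) xs hxs).1
  have hf0 : 0 ≤ f (x 0) := by rw [hf]; positivity
  have hp : (0:ℝ) ≤ (κ - 1) ^ k := pow_nonneg (by linarith) k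
  have hkey : (κ - 1) ^ k * f (x 0) ≤ C * α * δ := by
    rcases eq_or_lt_of_le hf0 with h0 | h0
    · rw [← h0, mul_zero]; positivity
    · have hCαδ : (0:ℝ) < C * α * δ := by positivity
      have hb : κ - 1 ≤ Real.exp (κ - 2) := by
        have := Real.add_one_le_exp (κ - 2); linarith
      have hpow : (κ - 1) ^ k ≤ Real.exp ((κ - 2) * k) := by
        calc (κ - 1) ^ k ≤ (Real.exp (κ - 2)) ^ k :=
              pow_le_pow_left₀ (by linarith) hb k
          _ = Real.exp ((κ - 2) * k) := by
              rw [mul_comm, Real.exp_nat_mul]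
      have hlog : Real.log (f (x 0) / (C * α * δ)) ≤ (2 - κ) * k := by
        have := mul_le_mul_of_nonneg_left hk (le_of_lt h2κ)
        calc Real.log (f (x 0) / (C * α * δ))
            = (2 - κ) * ((1 / (2 - κ)) * Real.log (f (x 0) / (C * α * δ))) := by
              field_simp
          _ ≤ (2 - κ) * k := this
      have hexp : f (x 0) / (C * α * δ) ≤ Real.exp ((2 - κ) * k) := by
        calc f (x 0) / (C * α * δ) = Real.exp (Real.log (f (x 0) / (C * α * δ))) := by
              rw [Real.exp_log (by positivity)]
          _ ≤ Real.exp ((2 - κ) * k) := Real.exp_le_exp.mpr hlog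
      have hf0le : f (x 0) ≤ C * α * δ * Real.exp ((2 - κ) * k) := by
        rw [div_le_iff₀ hCαδ] at hexp; linarith [hexp]
      calc (κ - 1) ^ k * f (x 0)
          ≤ Real.exp ((κ - 2) * k) * (C * α * δ * Real.exp ((2 - κ) * k)) := by
            apply mul_le_mul hpow hf0le (le_of_lt h0) (Real.exp_pos _).le
        _ = C * α * δ * Real.exp ((κ - 2) * k + (2 - κ) * k) := by
            rw [Real.exp_add]; ring
        _ = C * α * δ := by
            rw [show (κ - 2) * (k:ℝ) + (2 - κ) * k = 0 by ring, Real.exp_zero, mul_one]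
  have htail : β * δ * (1 - (κ - 1) ^ k) / (2 - κ) ≤ β * δ / (2 - κ) := by
    apply (div_le_div_iff_of_pos_right h2κ).mpr
    nlinarith [mul_nonneg (le_of_lt (mul_pos hβ hδ)) hp]
  have hchain : α * ‖x k - xs‖ ^ 2 ≤ C * α * δ + β * δ / (2 - κ) := by
    have := hbound k
    linarith
  have hβκ : β = κ * α := by rw [hκ]; field_simp
  have hrhs : (C + 1 / (2 / κ - 1)) * δ = C * δ + κ * δ / (2 - κ) := by
    have h1 : 2 / κ - 1 = (2 - κ) / κ := by field_simp
    rw [h1, one_div_div]; field_simp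
  rw [hrhs]
  have hXle : ‖x k - xs‖ ^ 2 ≤ C * δ + κ * δ / (2 - κ) := by
    rw [hβκ] at hchain
    have h2 : α * (C * δ + κ * δ / (2 - κ)) = C * α * δ + κ * α * δ / (2 - κ) := by
      field_simp
    nlinarith [hchain]
  exact hXle
end

section
/- Let A satisfy REC(S, α, β) with 0 < α ≤ β, let x* ∈ S, f(x) = ‖A(x − x*)‖², η = 1/β, and suppose x_t, x_{t+1} ∈ S satisfy ‖w_t − x_{t+1}‖² ≤ ‖x* − w_t‖² + δ where w_t = x_t − ηAᵀA(x_t − x*). Then 2⟨x_t − x_{t+1}, AᵀA(x* − x_t)⟩ ≤ (1/(ηα) − 2) f(x_t) − (1/(ηβ))‖A(x_{t+1} − x_t)‖² + δ/η. -/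
/-!
With `g = AᵀA (xₜ - x⋆)` and `w = xₜ - η g`, the quadratic terms `η² ‖g‖²` cancel when the
projection condition `‖w - xₜ₊₁‖² ≤ ‖x⋆ - w‖² + δ` is expanded, leaving a linear inequality in
`⟪xₜ - xₜ₊₁, g⟫`. The restricted eigenvalue condition then trades `‖xₜ - x⋆‖²` for `f(xₜ) / α`
and `‖xₜ₊₁ - xₜ‖²` for `‖A (xₜ₊₁ - xₜ)‖² / β`; dividing by `η` gives the bound.
-/

open Matrix LinearMap

section InnerProductSpace

variable {E F : Type*} [NormedAddCommGroup E] [InnerProductSpace ℝ E]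
  [NormedAddCommGroup F] [InnerProductSpace ℝ F]

lemma norm_sub_smul_sq_sub_norm_sub_smul_sq (a b g : E) (η : ℝ) :
    ‖a - η • g‖ ^ 2 - ‖b - η • g‖ ^ 2 = ‖a‖ ^ 2 - ‖b‖ ^ 2 - 2 * η * inner ℝ (a - b) g := by
  rw [norm_sub_sq_real, norm_sub_sq_real, inner_sub_left, real_inner_smul_right,
    real_inner_smul_right]
  ring

variable [FiniteDimensional ℝ E] [FiniteDimensional ℝ F]

lemma real_inner_adjoint_apply_self (T : E →ₗ[ℝ] F) (x : E) :
    inner ℝ x (adjoint T (T x)) = ‖T x‖ ^ 2 := by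
  rw [adjoint_inner_right, real_inner_self_eq_norm_sq]

lemma norm_sub_sq_add_le_of_norm_gradStep_sub_sq_le (T : E →ₗ[ℝ] F) {η δ : ℝ} {xs xt y : E}
    (hproj : ‖xt - η • adjoint T (T (xt - xs)) - y‖ ^ 2 ≤
      ‖xs - (xt - η • adjoint T (T (xt - xs)))‖ ^ 2 + δ) :
    ‖xt - y‖ ^ 2 + 2 * η * ‖T (xt - xs)‖ ^ 2 ≤
      ‖xt - xs‖ ^ 2 + 2 * η * inner ℝ (xt - y) (adjoint T (T (xt - xs))) + δ := by
  set g := adjoint T (T (xt - xs))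
  have hleft : xt - η • g - y = (xt - y) - η • g := by abel
  have hright : xs - (xt - η • g) = -((xt - xs) - η • g) := by abel
  have hexpand := norm_sub_smul_sq_sub_norm_sub_smul_sq (xt - y) (xt - xs) g η
  rw [inner_sub_left, real_inner_adjoint_apply_self] at hexpand
  rw [hleft, hright, norm_neg] at hproj
  linarith

theorem two_inner_adjoint_le_of_norm_gradStep_sub_sq_le (T : E →ₗ[ℝ] F) {α β δ η : ℝ}
    (hα : 0 < α) (hβ : 0 < β) (hη : 0 < η) {xs xt y : E}
    (hlower : α * ‖xt - xs‖ ^ 2 ≤ ‖T (xt - xs)‖ ^ 2)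
    (hupper : ‖T (y - xt)‖ ^ 2 ≤ β * ‖y - xt‖ ^ 2)
    (hproj : ‖xt - η • adjoint T (T (xt - xs)) - y‖ ^ 2 ≤
      ‖xs - (xt - η • adjoint T (T (xt - xs)))‖ ^ 2 + δ) :
    2 * inner ℝ (xt - y) (adjoint T (T (xs - xt))) ≤
      (1 / (η * α) - 2) * ‖T (xt - xs)‖ ^ 2 - 1 / (η * β) * ‖T (y - xt)‖ ^ 2 + δ / η := by
  have hstep := norm_sub_sq_add_le_of_norm_gradStep_sub_sq_le T hproj
  have hlower' : ‖xt - xs‖ ^ 2 ≤ ‖T (xt - xs)‖ ^ 2 / α := (le_div_iff₀' hα).2 hlower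
  have hupper' : ‖T (y - xt)‖ ^ 2 / β ≤ ‖xt - y‖ ^ 2 := by
    rw [norm_sub_rev]; exact (div_le_iff₀' hβ).2 hupper
  have hneg : inner ℝ (xt - y) (adjoint T (T (xs - xt))) =
      -inner ℝ (xt - y) (adjoint T (T (xt - xs))) := by
    rw [← neg_sub xt xs, map_neg, map_neg, inner_neg_right]
  have hrhs : (1 / (η * α) - 2) * ‖T (xt - xs)‖ ^ 2 - 1 / (η * β) * ‖T (y - xt)‖ ^ 2 + δ / η =
      (‖T (xt - xs)‖ ^ 2 / α - 2 * η * ‖T (xt - xs)‖ ^ 2 - ‖T (y - xt)‖ ^ 2 / β + δ) / η := by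
    field_simp
  rw [hneg, hrhs, le_div_iff₀ hη]
  linarith

end InnerProductSpace

theorem pgd_inner_product_bound_general {m n : ℕ} (A : Matrix (Fin m) (Fin n) ℝ)
    (S : Set (EuclideanSpace ℝ (Fin n))) (α β δ η : ℝ)
    (hα : 0 < α) (hαβ : α ≤ β) (hη : η = 1 / β)
    (hREC : ∀ x₁ ∈ S, ∀ x₂ ∈ S,
      α * ‖x₁ - x₂‖ ^ 2 ≤ ‖Matrix.toEuclideanLin A (x₁ - x₂)‖ ^ 2 ∧
      ‖Matrix.toEuclideanLin A (x₁ - x₂)‖ ^ 2 ≤ β * ‖x₁ - x₂‖ ^ 2)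
    (xs xt xt1 : EuclideanSpace ℝ (Fin n))
    (hxs : xs ∈ S) (hxt : xt ∈ S) (hxt1 : xt1 ∈ S)
    (f : EuclideanSpace ℝ (Fin n) → ℝ)
    (hf : ∀ x, f x = ‖Matrix.toEuclideanLin A (x - xs)‖ ^ 2)
    (w : EuclideanSpace ℝ (Fin n))
    (hw : w = xt - η • Matrix.toEuclideanLin Aᵀ (Matrix.toEuclideanLin A (xt - xs)))
    (hproj : ‖w - xt1‖ ^ 2 ≤ ‖xs - w‖ ^ 2 + δ) :
    2 * (inner ℝ (xt - xt1)
        (Matrix.toEuclideanLin Aᵀ (Matrix.toEuclideanLin A (xs - xt))) : ℝ) ≤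
      (1 / (η * α) - 2) * f xt -
      (1 / (η * β)) * ‖Matrix.toEuclideanLin A (xt1 - xt)‖ ^ 2 + δ / η := by
  have hβ : 0 < β := hα.trans_le hαβ
  have hη_pos : 0 < η := by rw [hη]; positivity
  have hAt : Matrix.toEuclideanLin Aᵀ = adjoint (Matrix.toEuclideanLin A) := by
    rw [← conjTranspose_eq_transpose_of_trivial, toEuclideanLin_conjTranspose_eq_adjoint]
  rw [hw, hAt] at hproj
  rw [hf, hAt]
  exact two_inner_adjoint_le_of_norm_gradStep_sub_sq_le _ hα hβ hη_pos
    (hREC xt hxt xs hxs).1 (hREC xt1 hxt1 xt hxt).2 hproj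

theorem pgd_inner_product_bound {m n : ℕ} (A : Matrix (Fin m) (Fin n) ℝ)
    (S : Set (EuclideanSpace ℝ (Fin n))) (α β δ η : ℝ)
    (hα : 0 < α) (hαβ : α ≤ β) (hδ : 0 ≤ δ) (hη : η = 1 / β)
    (hREC : ∀ x₁ ∈ S, ∀ x₂ ∈ S,
      α * ‖x₁ - x₂‖ ^ 2 ≤ ‖Matrix.toEuclideanLin A (x₁ - x₂)‖ ^ 2 ∧
      ‖Matrix.toEuclideanLin A (x₁ - x₂)‖ ^ 2 ≤ β * ‖x₁ - x₂‖ ^ 2)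
    (xs xt xt1 : EuclideanSpace ℝ (Fin n))
    (hxs : xs ∈ S) (hxt : xt ∈ S) (hxt1 : xt1 ∈ S)
    (f : EuclideanSpace ℝ (Fin n) → ℝ)
    (hf : ∀ x, f x = ‖Matrix.toEuclideanLin A (x - xs)‖ ^ 2)
    (w : EuclideanSpace ℝ (Fin n))
    (hw : w = xt - η • Matrix.toEuclideanLin Aᵀ (Matrix.toEuclideanLin A (xt - xs)))
    (hproj : ‖w - xt1‖ ^ 2 ≤ ‖xs - w‖ ^ 2 + δ) :
    2 * (inner ℝ (xt - xt1)
        (Matrix.toEuclideanLin Aᵀ (Matrix.toEuclideanLin A (xs - xt))) : ℝ) ≤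
      (1 / (η * α) - 2) * f xt -
      (1 / (η * β)) * ‖Matrix.toEuclideanLin A (xt1 - xt)‖ ^ 2 + δ / η :=
  pgd_inner_product_bound_general A S α β δ η hα hαβ hη hREC xs xt xt1 hxs hxt hxt1 f hf w hw hproj
end
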